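/- Fix β > 0. There is a constant C such that for every integer n > 1 and every continuous function f : ℝ → ℂ with f(x) → 0 as |x| → ∞, the rational interpolant R_nf belongs to L²(ℝ) and ( ∫_ℝ |R_nf(x)|² dx )^{1/2} ≤ C n (log n) sup_{x∈ℝ} |f(x)|. -/

import Mathlib

open MeasureTheory

/-- The Möbius map `M_β(x) = (x - iβ)/(x + iβ)` for real `x`. -/
noncomputable def Mob (β : ℝ) (x : ℝ) : ℂ :=
  ((x : ℂ) - Complex.I * β) / ((x : ℂ) + Complex.I * β)

/-- The change of variables `T(θ) = -β cot(θ/2)` mapping `(0, 2π)` onto `ℝ`. -/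
noncomputable def Tmap (β : ℝ) (θ : ℝ) : ℝ :=
  -β * (Real.cos (θ / 2) / Real.sin (θ / 2))

/-- Discrete Fourier coefficients `F̃_k = (1/n) ∑_{ℓ=0}^{n-1} e^{-ikθ_ℓ} F(θ_ℓ)`. -/
noncomputable def dftCoeff (n : ℕ) (F : ℝ → ℂ) (k : ℤ) : ℂ :=
  (n : ℂ)⁻¹ * ∑ ℓ ∈ Finset.range n,
    Complex.exp (-Complex.I * (k : ℂ) * ((2 * Real.pi * ℓ / n : ℝ) : ℂ)) *
      F (2 * Real.pi * ℓ / n)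

/-- The rational interpolant `R_n f(x) = ∑_{k=-n₋}^{n₊} F̃_k (M_β(x)^k − 1)`. -/
noncomputable def ratInterp (β : ℝ) (n : ℕ) (F : ℝ → ℂ) (x : ℝ) : ℂ :=
  ∑ k ∈ Finset.Icc (-(((n - 1) / 2 : ℕ) : ℤ)) ((n / 2 : ℕ) : ℤ),
    dftCoeff n F k * (Mob β x ^ k - 1)

/-!
Write `R_n f = ∑_k F̃_k (M_β^k - 1)` over `n` frequencies `|k| ≤ n`. Since `|M_β| = 1` on `ℝ`,
`|M_β^k - 1|² ≤ min (4, k² |M_β - 1|²)`, and this is dominated by `8π|kβ|` times the Cauchy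
density of scale `|kβ|`; hence `‖M_β^k - 1‖₂ ≤ √(8π|kβ|)`. The triangle inequality and
Cauchy–Schwarz give `‖R_n f‖₂ ≤ (∑ |F̃_k|²)^{1/2} (8π|β| n²)^{1/2}`, and the discrete Parseval
identity bounds `∑ |F̃_k|²` by the mean of `|F(θ_ℓ)|² ≤ (sup |f|)²`. So `‖R_n f‖₂ ≤ C n sup |f|`,
which is stronger than the claim since `1 ≤ log n / log 2`.
-/

open Finset ProbabilityTheory Real
open scoped ENNReal ComplexConjugate

/-- `{-n₋, …, n₊}`, a complete residue system modulo `n`. -/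
noncomputable def freqs (n : ℕ) : Finset ℤ :=
  Icc (-(((n - 1) / 2 : ℕ) : ℤ)) ((n / 2 : ℕ) : ℤ)

section Frequencies

variable {n : ℕ}

lemma freqs_eq_map (hn : n ≠ 0) :
    freqs n = (range n).map
      (Nat.castEmbedding.trans (addRightEmbedding (-(((n - 1) / 2 : ℕ) : ℤ)))) := by
  ext k
  simp only [freqs, mem_Icc, Finset.mem_map, mem_range, Function.Embedding.trans_apply,
    Nat.castEmbedding_apply, addRightEmbedding_apply]
  constructor
  · intro h
    exact ⟨(k + ((n - 1) / 2 : ℕ)).toNat, by omega, by omega⟩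
  · rintro ⟨j, hj, rfl⟩
    omega

lemma card_freqs (hn : n ≠ 0) : #(freqs n) = n := by
  rw [freqs_eq_map hn, card_map, card_range]

lemma abs_le_of_mem_freqs {k : ℤ} (hk : k ∈ freqs n) : |k| ≤ n := by
  rw [freqs, mem_Icc] at hk
  exact abs_le.mpr ⟨by omega, by omega⟩

lemma sum_freqs_zpow_eq_zero {K : Type*} [Field K] (hn : n ≠ 0) {z : K} (hzn : z ^ n = 1)
    (hz1 : z ≠ 1) : ∑ k ∈ freqs n, z ^ k = 0 := by
  have hz0 : z ≠ 0 := by rintro rfl; simp [hn] at hzn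
  simp only [freqs_eq_map hn, sum_map, Function.Embedding.trans_apply, Nat.castEmbedding_apply,
    addRightEmbedding_apply, zpow_add₀ hz0, zpow_natCast]
  rw [← sum_mul, geom_sum_eq hz1, hzn, sub_self, zero_div, zero_mul]

lemma IsPrimitiveRoot.sum_freqs_zpow_sub {K : Type*} [Field K] {ζ : K}
    (hζ : IsPrimitiveRoot ζ n) (hn : n ≠ 0) {ℓ m : ℕ} (hℓ : ℓ < n) (hm : m < n) :
    ∑ k ∈ freqs n, (ζ ^ ((ℓ : ℤ) - m)) ^ k = if ℓ = m then (n : K) else 0 := by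
  split_ifs with h
  · simp [h, card_freqs hn]
  · apply sum_freqs_zpow_eq_zero hn
    · rw [← zpow_natCast, ← zpow_mul, mul_comm, zpow_mul, zpow_natCast, hζ.pow_eq_one, one_zpow]
    · rw [Ne, hζ.zpow_eq_one_iff_dvd]
      intro hdvd
      have := Int.eq_zero_of_abs_lt_dvd hdvd (abs_lt.mpr ⟨by omega, by omega⟩)
      omega

end Frequencies

section DiscreteFourier

variable {n : ℕ}

lemma IsPrimitiveRoot.sum_freqs_norm_sq {ζ : ℂ} (hζ : IsPrimitiveRoot ζ n) (hn : n ≠ 0)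
    (G : ℕ → ℂ) :
    ∑ k ∈ freqs n, ‖∑ ℓ ∈ range n, ζ ^ (k * ℓ) * G ℓ‖ ^ 2 = n * ∑ ℓ ∈ range n, ‖G ℓ‖ ^ 2 := by
  have hζ0 : ζ ≠ 0 := hζ.ne_zero hn
  have hconj : conj ζ = ζ⁻¹ := (Complex.inv_eq_conj (hζ.norm'_eq_one hn)).symm
  have hprod (k : ℤ) (ℓ m : ℕ) : ζ ^ (k * ℓ) * conj (ζ ^ (k * m)) = (ζ ^ ((ℓ : ℤ) - m)) ^ k := by
    rw [map_zpow₀, hconj, inv_zpow', ← zpow_add₀ hζ0, ← zpow_mul]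
    ring_nf
  apply Complex.ofReal_injective
  push_cast
  simp_rw [← Complex.mul_conj', map_sum, map_mul, sum_mul_sum]
  calc ∑ k ∈ freqs n, ∑ ℓ ∈ range n, ∑ m ∈ range n,
        ζ ^ (k * ℓ) * G ℓ * (conj (ζ ^ (k * m)) * conj (G m))
      = ∑ ℓ ∈ range n, ∑ m ∈ range n,
          G ℓ * conj (G m) * ∑ k ∈ freqs n, (ζ ^ ((ℓ : ℤ) - m)) ^ k := by
        rw [sum_comm]
        refine sum_congr rfl fun ℓ _ => ?_
        rw [sum_comm]
        refine sum_congr rfl fun m _ => ?_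
        rw [mul_sum]
        refine sum_congr rfl fun k _ => ?_
        rw [← hprod]
        ring
    _ = n * ∑ ℓ ∈ range n, G ℓ * conj (G ℓ) := by
        rw [mul_sum]
        refine sum_congr rfl fun ℓ hℓ => ?_
        rw [sum_congr rfl fun m hm => by
          rw [hζ.sum_freqs_zpow_sub hn (mem_range.mp hℓ) (mem_range.mp hm)]]
        simp [hℓ, mul_comm]

lemma dftCoeff_eq_sum_zpow (F : ℝ → ℂ) (k : ℤ) :
    dftCoeff n F k = (n : ℂ)⁻¹ * ∑ ℓ ∈ range n,
      Complex.exp (-(2 * π * Complex.I / n)) ^ (k * ℓ) * F (2 * π * ℓ / n) := by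
  simp only [dftCoeff, ← Complex.exp_int_mul]
  congr 1
  refine sum_congr rfl fun ℓ _ => ?_
  congr 2
  push_cast
  ring

lemma sum_freqs_norm_dftCoeff_sq (hn : n ≠ 0) (F : ℝ → ℂ) :
    ∑ k ∈ freqs n, ‖dftCoeff n F k‖ ^ 2
      = (n : ℝ)⁻¹ * ∑ ℓ ∈ range n, ‖F (2 * π * ℓ / n)‖ ^ 2 := by
  have hζ : IsPrimitiveRoot (Complex.exp (-(2 * π * Complex.I / n))) n := by
    rw [Complex.exp_neg]
    exact (Complex.isPrimitiveRoot_exp n hn).inv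
  simp_rw [dftCoeff_eq_sum_zpow, norm_mul, mul_pow, ← mul_sum, hζ.sum_freqs_norm_sq hn,
    norm_inv, Complex.norm_natCast]
  have : (n : ℝ) ≠ 0 := Nat.cast_ne_zero.mpr hn
  field_simp

lemma sum_freqs_norm_dftCoeff_sq_le (hn : n ≠ 0) {F : ℝ → ℂ} {M : ℝ}
    (hM : ∀ ℓ < n, ‖F (2 * π * ℓ / n)‖ ≤ M) :
    ∑ k ∈ freqs n, ‖dftCoeff n F k‖ ^ 2 ≤ M ^ 2 := by
  have hn' : (0 : ℝ) < n := by positivity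
  rw [sum_freqs_norm_dftCoeff_sq hn, inv_mul_le_iff₀ hn']
  calc ∑ ℓ ∈ range n, ‖F (2 * π * ℓ / n)‖ ^ 2 ≤ ∑ ℓ ∈ range n, M ^ 2 :=
        sum_le_sum fun ℓ hℓ => pow_le_pow_left₀ (norm_nonneg _) (hM ℓ (mem_range.mp hℓ)) 2
    _ = n * M ^ 2 := by simp

end DiscreteFourier

lemma norm_pow_sub_one_le {𝕜 : Type*} [NormedDivisionRing 𝕜] {z : 𝕜} (hz : ‖z‖ = 1) (m : ℕ) :
    ‖z ^ m - 1‖ ≤ m * ‖z - 1‖ := by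
  rw [← geom_sum_mul, norm_mul]
  gcongr
  calc ‖∑ i ∈ range m, z ^ i‖ ≤ ∑ i ∈ range m, ‖z ^ i‖ := norm_sum_le _ _
    _ = m := by simp [hz]

lemma norm_zpow_sub_one_le {𝕜 : Type*} [NormedDivisionRing 𝕜] {z : 𝕜} (hz : ‖z‖ = 1) (k : ℤ) :
    ‖z ^ k - 1‖ ≤ |k| * ‖z - 1‖ := by
  obtain ⟨m, rfl | rfl⟩ := k.eq_nat_or_neg
  · simpa using norm_pow_sub_one_le hz m
  · have hz0 : z ≠ 0 := norm_ne_zero_iff.mp (by rw [hz]; exact one_ne_zero)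
    have hneg : z ^ (-(m : ℤ)) - 1 = -(z ^ (-(m : ℤ)) * (z ^ m - 1)) := by
      rw [mul_sub, ← zpow_natCast, ← zpow_add₀ hz0]
      simp
    rw [hneg, norm_neg, norm_mul, norm_zpow, hz, one_zpow, one_mul]
    simpa using norm_pow_sub_one_le hz m

section Mobius

variable {β : ℝ}

lemma ofReal_add_I_mul_ne_zero (hβ : β ≠ 0) (x : ℝ) : (x : ℂ) + Complex.I * β ≠ 0 := by
  intro h
  simpa [hβ] using congrArg Complex.im h

lemma continuous_Mob (hβ : β ≠ 0) : Continuous (Mob β) :=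
  Continuous.div (by fun_prop) (by fun_prop) (ofReal_add_I_mul_ne_zero hβ)

lemma norm_Mob (hβ : β ≠ 0) (x : ℝ) : ‖Mob β x‖ = 1 := by
  have hconj : (x : ℂ) - Complex.I * β = conj ((x : ℂ) + Complex.I * β) := by
    simp [sub_eq_add_neg]
  rw [Mob, norm_div, hconj, Complex.norm_conj,
    div_self (norm_ne_zero_iff.mpr (ofReal_add_I_mul_ne_zero hβ x))]

lemma norm_Mob_sub_one_sq (hβ : β ≠ 0) (x : ℝ) :
    ‖Mob β x - 1‖ ^ 2 = 4 * β ^ 2 / (x ^ 2 + β ^ 2) := by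
  have hd := ofReal_add_I_mul_ne_zero hβ x
  have hsub : Mob β x - 1 = -2 * Complex.I * β / ((x : ℂ) + Complex.I * β) := by
    rw [Mob, div_sub_one hd]
    ring
  rw [hsub, norm_div, div_pow, Complex.sq_norm, Complex.sq_norm]
  simp [Complex.normSq_apply]
  ring

lemma norm_Mob_zpow_sub_one_sq_le (hβ : β ≠ 0) (k : ℤ) (x : ℝ) :
    ‖Mob β x ^ k - 1‖ ^ 2 ≤ 8 * π * ‖k * β‖ * cauchyPDFReal 0 ‖(k : ℝ) * β‖₊ x := by
  rcases eq_or_ne k 0 with rfl | hk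
  · simp
  set a := ‖Mob β x ^ k - 1‖ ^ 2
  have ha0 : 0 ≤ a := sq_nonneg _
  have ha4 : a ≤ 4 := by
    have : ‖Mob β x ^ k - 1‖ ≤ 2 := by
      calc ‖Mob β x ^ k - 1‖ ≤ ‖Mob β x ^ k‖ + ‖(1 : ℂ)‖ := norm_sub_le _ _
        _ = 2 := by rw [norm_zpow, norm_Mob hβ, one_zpow, norm_one]; norm_num
    nlinarith [norm_nonneg (Mob β x ^ k - 1)]
  have hak : a * (x ^ 2 + β ^ 2) ≤ 4 * ((k : ℝ) * β) ^ 2 := by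
    have h := pow_le_pow_left₀ (norm_nonneg _) (norm_zpow_sub_one_le (norm_Mob hβ x) k) 2
    rw [mul_pow, norm_Mob_sub_one_sq hβ, Int.cast_abs, sq_abs] at h
    have hpos : 0 < x ^ 2 + β ^ 2 := by positivity
    calc a * (x ^ 2 + β ^ 2) ≤ (k : ℝ) ^ 2 * (4 * β ^ 2 / (x ^ 2 + β ^ 2)) * (x ^ 2 + β ^ 2) :=
          mul_le_mul_of_nonneg_right (by exact_mod_cast h) hpos.le
      _ = 4 * ((k : ℝ) * β) ^ 2 := by field_simp
  have hpos : 0 < x ^ 2 + ((k : ℝ) * β) ^ 2 := by positivity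
  rw [cauchyPDFReal_def, coe_nnnorm, Real.norm_eq_abs, sub_zero, sq_abs]
  rw [show 8 * π * |(k : ℝ) * β| * (π⁻¹ * |(k : ℝ) * β| * (x ^ 2 + ((k : ℝ) * β) ^ 2)⁻¹)
      = 8 * ((k : ℝ) * β) ^ 2 / (x ^ 2 + ((k : ℝ) * β) ^ 2) by
    rw [← sq_abs ((k : ℝ) * β)]; field_simp]
  rw [le_div_iff₀ hpos]
  nlinarith [mul_nonneg ha0 (sq_nonneg β), mul_le_mul_of_nonneg_right ha4 (sq_nonneg ((k : ℝ) * β))]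

end Mobius

section Lp

lemma MeasureTheory.MemLp.eLpNorm_two_eq_ofReal_sqrt {α E : Type*} [MeasurableSpace α]
    {μ : Measure α} [NormedAddCommGroup E] {f : α → E} (hf : MemLp f 2 μ) :
    eLpNorm f 2 μ = ENNReal.ofReal √(∫ x, ‖f x‖ ^ 2 ∂μ) := by
  simp only [hf.eLpNorm_eq_integral_rpow_norm two_ne_zero ENNReal.ofNat_ne_top,
    ENNReal.toReal_ofNat, Real.rpow_two, Real.sqrt_eq_rpow, one_div]

lemma eLpNorm_sum_smul_le {ι α 𝕜 E : Type*} [MeasurableSpace α] {μ : Measure α}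
    [NormedField 𝕜] [NormedAddCommGroup E] [NormedSpace 𝕜 E] {p : ℝ≥0∞} (hp : 1 ≤ p)
    (s : Finset ι) (c : ι → 𝕜) {g : ι → α → E} {b : ι → ℝ}
    (hg : ∀ i ∈ s, AEStronglyMeasurable (g i) μ) (hb : ∀ i ∈ s, 0 ≤ b i)
    (hgb : ∀ i ∈ s, eLpNorm (g i) p μ ≤ ENNReal.ofReal (b i)) :
    eLpNorm (∑ i ∈ s, c i • g i) p μ
      ≤ ENNReal.ofReal (√(∑ i ∈ s, ‖c i‖ ^ 2) * √(∑ i ∈ s, b i ^ 2)) := by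
  calc eLpNorm (∑ i ∈ s, c i • g i) p μ ≤ ∑ i ∈ s, eLpNorm (c i • g i) p μ :=
        eLpNorm_sum_le (fun i hi => (hg i hi).const_smul (c i)) hp
    _ ≤ ∑ i ∈ s, ENNReal.ofReal (‖c i‖ * b i) := by
        refine sum_le_sum fun i hi => ?_
        rw [ENNReal.ofReal_mul (norm_nonneg _), ofReal_norm]
        exact eLpNorm_const_smul_le.trans (by gcongr; exact hgb i hi)
    _ = ENNReal.ofReal (∑ i ∈ s, ‖c i‖ * b i) :=
        (ENNReal.ofReal_sum_of_nonneg fun i hi => mul_nonneg (norm_nonneg _) (hb i hi)).symm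
    _ ≤ _ := ENNReal.ofReal_le_ofReal (Real.sum_mul_le_sqrt_mul_sqrt s _ _)

end Lp

section RationalInterpolant

variable {β : ℝ}

lemma continuous_Mob_zpow_sub_one (hβ : β ≠ 0) (k : ℤ) :
    Continuous fun x => Mob β x ^ k - 1 :=
  ((continuous_Mob hβ).zpow₀ k fun x =>
    Or.inl (norm_ne_zero_iff.mp (by simp [norm_Mob hβ]))).sub continuous_const

lemma integrable_norm_Mob_zpow_sub_one_sq (hβ : β ≠ 0) (k : ℤ) :
    Integrable fun x => ‖Mob β x ^ k - 1‖ ^ 2 := by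
  refine (((integrable_cauchyPDFReal 0 (γ := ‖(k : ℝ) * β‖₊)).const_mul
    (8 * π * ‖k * β‖)).mono' ?_ (Filter.Eventually.of_forall fun x => ?_))
  · exact ((continuous_Mob_zpow_sub_one hβ k).norm.pow 2).aestronglyMeasurable
  · rw [Real.norm_of_nonneg (sq_nonneg _)]
    exact norm_Mob_zpow_sub_one_sq_le hβ k x

lemma memLp_Mob_zpow_sub_one (hβ : β ≠ 0) (k : ℤ) :
    MemLp (fun x => Mob β x ^ k - 1) 2 volume :=
  (memLp_two_iff_integrable_sq_norm (continuous_Mob_zpow_sub_one hβ k).aestronglyMeasurable).mpr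
    (integrable_norm_Mob_zpow_sub_one_sq hβ k)

lemma eLpNorm_Mob_zpow_sub_one_le (hβ : β ≠ 0) (k : ℤ) :
    eLpNorm (fun x => Mob β x ^ k - 1) 2 volume ≤ ENNReal.ofReal √(8 * π * |k * β|) := by
  rw [(memLp_Mob_zpow_sub_one hβ k).eLpNorm_two_eq_ofReal_sqrt]
  gcongr
  calc ∫ x, ‖Mob β x ^ k - 1‖ ^ 2
      ≤ ∫ x, 8 * π * ‖k * β‖ * cauchyPDFReal 0 ‖(k : ℝ) * β‖₊ x :=
        integral_mono (integrable_norm_Mob_zpow_sub_one_sq hβ k)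
          ((integrable_cauchyPDFReal 0).const_mul _) (norm_Mob_zpow_sub_one_sq_le hβ k)
    _ = 8 * π * |k * β| := by
        rcases eq_or_ne ((k : ℝ) * β) 0 with h | h
        · simp [h]
        · rw [integral_const_mul, integral_cauchyPDFReal_eq_one 0 (nnnorm_ne_zero_iff.mpr h),
            mul_one, Real.norm_eq_abs]

lemma ratInterp_eq_sum_smul (n : ℕ) (F : ℝ → ℂ) :
    ratInterp β n F = ∑ k ∈ freqs n, dftCoeff n F k • fun x => Mob β x ^ k - 1 := by
  ext x
  simp [ratInterp, freqs]

lemma memLp_ratInterp (hβ : β ≠ 0) (n : ℕ) (F : ℝ → ℂ) : MemLp (ratInterp β n F) 2 volume := by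
  rw [ratInterp_eq_sum_smul]
  exact memLp_finsetSum' _ fun k _ => (memLp_Mob_zpow_sub_one hβ k).const_smul _

lemma eLpNorm_ratInterp_le (hβ : β ≠ 0) {n : ℕ} (hn : n ≠ 0) {F : ℝ → ℂ} {M : ℝ}
    (hM : ∀ ℓ < n, ‖F (2 * π * ℓ / n)‖ ≤ M) :
    eLpNorm (ratInterp β n F) 2 volume ≤ ENNReal.ofReal (√(8 * π * |β|) * n * M) := by
  have hM0 : 0 ≤ M := (norm_nonneg _).trans (hM 0 (Nat.pos_of_ne_zero hn))
  rw [ratInterp_eq_sum_smul]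
  refine (eLpNorm_sum_smul_le one_le_two _ _ (fun k _ => (memLp_Mob_zpow_sub_one hβ k).1)
    (fun k _ => Real.sqrt_nonneg _) (fun k _ => eLpNorm_Mob_zpow_sub_one_le hβ k)).trans ?_
  have hcoeff : √(∑ k ∈ freqs n, ‖dftCoeff n F k‖ ^ 2) ≤ M :=
    Real.sqrt_le_iff.mpr ⟨hM0, sum_freqs_norm_dftCoeff_sq_le hn hM⟩
  have hweight : √(∑ k ∈ freqs n, √(8 * π * |k * β|) ^ 2) ≤ √(8 * π * |β|) * n := by
    rw [← Real.sqrt_sq (Nat.cast_nonneg n), ← Real.sqrt_mul (by positivity)]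
    gcongr
    calc ∑ k ∈ freqs n, √(8 * π * |k * β|) ^ 2 ≤ ∑ k ∈ freqs n, 8 * π * |β| * n := by
          refine sum_le_sum fun k hk => ?_
          have hkn : |(k : ℝ)| ≤ n := by exact_mod_cast abs_le_of_mem_freqs hk
          rw [Real.sq_sqrt (by positivity), abs_mul, mul_comm |(k : ℝ)|, ← mul_assoc]
          gcongr
      _ = 8 * π * |β| * n ^ 2 := by rw [sum_const, card_freqs hn, nsmul_eq_mul]; ring
  refine ENNReal.ofReal_le_ofReal ?_
  calc √(∑ k ∈ freqs n, ‖dftCoeff n F k‖ ^ 2) * √(∑ k ∈ freqs n, √(8 * π * |k * β|) ^ 2)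
      ≤ M * (√(8 * π * |β|) * n) := mul_le_mul hcoeff hweight (Real.sqrt_nonneg _) hM0
    _ = √(8 * π * |β|) * n * M := by ring

end RationalInterpolant

lemma bddAbove_range_norm_of_tendsto_cocompact {α E : Type*} [TopologicalSpace α]
    [NormedAddCommGroup E] {f : α → E} (hf : Continuous f)
    (hf0 : Filter.Tendsto f (Filter.cocompact α) (nhds 0)) :
    BddAbove (Set.range fun x => ‖f x‖) := by
  let f₀ : ZeroAtInftyContinuousMap α E := ⟨⟨f, hf⟩, hf0⟩
  exact ⟨‖f₀.toBCF‖, Set.forall_mem_range.mpr f₀.toBCF.norm_coe_le_norm⟩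

lemma norm_apply_node_le_iSup {f F : ℝ → ℂ} {T : ℝ → ℝ}
    (hf : BddAbove (Set.range fun x => ‖f x‖))
    (hF : ∀ θ ∈ Set.Ioo (0 : ℝ) (2 * π), F θ = f (T θ)) (hF0 : F 0 = 0) {n ℓ : ℕ} (hℓ : ℓ < n) :
    ‖F (2 * π * ℓ / n)‖ ≤ ⨆ x, ‖f x‖ := by
  rcases Nat.eq_zero_or_pos ℓ with rfl | hℓ0
  · simpa [hF0] using Real.iSup_nonneg fun x => norm_nonneg (f x)
  have hnode : 2 * π * ℓ / n ∈ Set.Ioo 0 (2 * π) := by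
    have hℓn : (ℓ : ℝ) < n := by exact_mod_cast hℓ
    have hℓ0 : (0 : ℝ) < ℓ := by exact_mod_cast hℓ0
    refine ⟨div_pos (mul_pos two_pi_pos hℓ0) (hℓ0.trans hℓn), ?_⟩
    rw [div_lt_iff₀ (hℓ0.trans hℓn)]
    gcongr
  rw [hF _ hnode]
  exact le_ciSup hf _

/-- **`C⁰₀(ℝ) → L²(ℝ)` bound for the rational interpolation operator.**
Fix `β > 0`. There is a constant `C` such that for every `n > 1` and every
continuous `f : ℝ → ℂ` with `f(x) → 0` as `|x| → ∞` (with associated periodic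
function `F`), `R_n f ∈ L²(ℝ)` and
`(∫ |R_n f(x)|² dx)^{1/2} ≤ C n (log n) sup_x |f(x)|`. -/
theorem ratInterp_L2_norm (β : ℝ) (hβ : 0 < β) :
    ∃ C : ℝ, 0 < C ∧ ∀ n : ℕ, 1 < n → ∀ f F : ℝ → ℂ,
      Continuous f →
      Filter.Tendsto f (Filter.cocompact ℝ) (nhds 0) →
      Function.Periodic F (2 * Real.pi) →
      (∀ θ ∈ Set.Ioo (0 : ℝ) (2 * Real.pi), F θ = f (Tmap β θ)) →
      F 0 = 0 →
      MemLp (fun x => ratInterp β n F x) 2 volume ∧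
      (∫ x : ℝ, ‖ratInterp β n F x‖ ^ 2) ^ ((1 : ℝ) / 2)
        ≤ C * n * Real.log n * ⨆ x : ℝ, ‖f x‖ := by
  have hlog2 : 0 < Real.log 2 := Real.log_pos one_lt_two
  refine ⟨√(8 * π * β) / Real.log 2, by positivity, fun n hn f F hf hf0 _ hF hF0 => ?_⟩
  have hn0 : n ≠ 0 := by omega
  have hM0 : 0 ≤ ⨆ x, ‖f x‖ := Real.iSup_nonneg fun x => norm_nonneg (f x)
  have hmem := memLp_ratInterp hβ.ne' n F
  have hL2 := eLpNorm_ratInterp_le hβ.ne' hn0 fun ℓ hℓ =>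
    norm_apply_node_le_iSup (bddAbove_range_norm_of_tendsto_cocompact hf hf0) hF hF0 hℓ
  rw [hmem.eLpNorm_two_eq_ofReal_sqrt, ENNReal.ofReal_le_ofReal_iff (by positivity),
    abs_of_pos hβ] at hL2
  have hlogn : Real.log 2 ≤ Real.log n := Real.log_le_log two_pos (by exact_mod_cast hn)
  refine ⟨hmem, ?_⟩
  calc (∫ x : ℝ, ‖ratInterp β n F x‖ ^ 2) ^ ((1 : ℝ) / 2)
      = √(∫ x : ℝ, ‖ratInterp β n F x‖ ^ 2) := (Real.sqrt_eq_rpow _).symm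
    _ ≤ √(8 * π * β) * n * 1 * ⨆ x, ‖f x‖ := by rwa [mul_one]
    _ ≤ √(8 * π * β) * n * (Real.log n / Real.log 2) * ⨆ x, ‖f x‖ := by
        gcongr
        exact (one_le_div hlog2).mpr hlogn
    _ = √(8 * π * β) / Real.log 2 * n * Real.log n * ⨆ x, ‖f x‖ := by ring
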